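/- arXiv:1911.12289 — 6 statements merged into one kernel-verified Lean document; each statement's English description precedes it below -/
import Mathlib

section
/- ∫_{ℝ³} x₂² / (‖x‖³ · ‖x − e₃‖³) dx = 2π, where e₃ = (0,0,1) and x₂ denotes the second coordinate of x. -/
/-!
Slice `ℝ³` by the horizontal planes at height `z`. In polar coordinates `(ρ, θ)` on such a plane
the integrand factors: the angular part gives `∫ sin² θ = π`, and the radial part
`∫₀^∞ ρ³ dρ / (s³ t³)`, with `s = √(ρ² + z²)`, `t = √(ρ² + (z - 1)²)` the distances to `0` and `e₃`,
has the elementary primitive `-(ρ² + s t) / (s t (s + t)²)` and equals `1 / (|z| + |z - 1|)²`.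
This is `1` for `0 ≤ z ≤ 1`, and each of the two tails `z > 1`, `z < 0` (exchanged by `z ↦ 1 - z`)
contributes `1/2`, so the total is `2π`. Working with lower Lebesgue integrals throughout lets
Tonelli's theorem and the changes of variables run without any integrability bookkeeping.
-/

open MeasureTheory Real
open scoped RealInnerProductSpace

noncomputable section

/-- The cross product on `EuclideanSpace ℝ (Fin 3)`. -/
def cross (u v : EuclideanSpace ℝ (Fin 3)) : EuclideanSpace ℝ (Fin 3) :=
  (WithLp.equiv 2 (Fin 3 → ℝ)).symm
    ![u 1 * v 2 - u 2 * v 1, u 2 * v 0 - u 0 * v 2, u 0 * v 1 - u 1 * v 0]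

/-- The third standard basis vector `e₃ = (0,0,1)`. -/
def e3 : EuclideanSpace ℝ (Fin 3) := (WithLp.equiv 2 (Fin 3 → ℝ)).symm ![0, 0, 1]

open Set Filter Topology

theorem lintegral_Ioi_ofReal_deriv_of_nonneg {g g' : ℝ → ℝ} {a l : ℝ}
    (hderiv : ∀ x ∈ Ici a, HasDerivAt g (g' x) x) (g'pos : ∀ x ∈ Ioi a, 0 ≤ g' x)
    (hg : Tendsto g atTop (𝓝 l)) :
    ∫⁻ x in Ioi a, ENNReal.ofReal (g' x) = ENNReal.ofReal (l - g a) := by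
  rw [← ofReal_integral_eq_lintegral_ofReal (integrableOn_Ioi_deriv_of_nonneg' hderiv g'pos hg)
    ((ae_restrict_iff' measurableSet_Ioi).2 (ae_of_all _ g'pos)),
    integral_Ioi_of_hasDerivAt_of_nonneg' hderiv g'pos hg]

theorem lintegral_sin_sq_Ioo_neg_pi_pi :
    ∫⁻ θ in Ioo (-π) π, ENNReal.ofReal (sin θ ^ 2) = ENNReal.ofReal π := by
  have hint : IntegrableOn (fun θ => sin θ ^ 2) (Ioo (-π) π) :=
    (continuous_sin.pow 2).integrableOn_Icc.mono_set Ioo_subset_Icc_self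
  rw [← ofReal_integral_eq_lintegral_ofReal hint (ae_of_all _ fun _ => sq_nonneg _),
    setIntegral_congr_set Ioo_ae_eq_Ioc, ← intervalIntegral.integral_of_le (by linarith [pi_pos]),
    integral_sin_sq]
  simp

theorem hasDerivAt_sqrt_sq_add_sq {a : ℝ} (ha : a ≠ 0) (ρ : ℝ) :
    HasDerivAt (fun r => √(r ^ 2 + a ^ 2)) (ρ / √(ρ ^ 2 + a ^ 2)) ρ := by
  convert ((hasDerivAt_pow 2 ρ).add_const (a ^ 2)).sqrt (by positivity) using 1
  field_simp
  ring

section Radial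

variable {a b : ℝ}

def radialPrimitive (a b ρ : ℝ) : ℝ :=
  -(ρ ^ 2 + √(ρ ^ 2 + a ^ 2) * √(ρ ^ 2 + b ^ 2)) /
    (√(ρ ^ 2 + a ^ 2) * √(ρ ^ 2 + b ^ 2) * (√(ρ ^ 2 + a ^ 2) + √(ρ ^ 2 + b ^ 2)) ^ 2)

theorem hasDerivAt_radialPrimitive (ha : a ≠ 0) (hb : b ≠ 0) (ρ : ℝ) :
    HasDerivAt (radialPrimitive a b)
      (ρ ^ 3 / (√(ρ ^ 2 + a ^ 2) ^ 3 * √(ρ ^ 2 + b ^ 2) ^ 3)) ρ := by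
  have hs := hasDerivAt_sqrt_sq_add_sq ha ρ
  have ht := hasDerivAt_sqrt_sq_add_sq hb ρ
  have hs₀ : 0 < √(ρ ^ 2 + a ^ 2) := by positivity
  have ht₀ : 0 < √(ρ ^ 2 + b ^ 2) := by positivity
  refine ((((hasDerivAt_pow 2 ρ).fun_add (hs.fun_mul ht)).fun_neg).fun_div
    ((hs.fun_mul ht).fun_mul ((hs.fun_add ht).fun_pow 2)) (by positivity)).congr_deriv ?_
  generalize √(ρ ^ 2 + a ^ 2) = s at *
  generalize √(ρ ^ 2 + b ^ 2) = t at *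
  field_simp
  ring

theorem radialPrimitive_zero (ha : a ≠ 0) (hb : b ≠ 0) :
    radialPrimitive a b 0 = -((|a| + |b|) ^ 2)⁻¹ := by
  have ha' : 0 < |a| := abs_pos.2 ha
  have hb' : 0 < |b| := abs_pos.2 hb
  simp only [radialPrimitive, zero_pow two_ne_zero, zero_add, sqrt_sq_eq_abs]
  field_simp

theorem tendsto_radialPrimitive_atTop (ha : a ≠ 0) (hb : b ≠ 0) :
    Tendsto (radialPrimitive a b) atTop (𝓝 0) := by
  have hlow : Tendsto (fun r : ℝ => -2 / (r ^ 2 + a ^ 2)) atTop (𝓝 0) :=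
    tendsto_const_nhds.div_atTop (tendsto_atTop_add_const_right _ _ (tendsto_pow_atTop two_ne_zero))
  refine tendsto_of_tendsto_of_tendsto_of_le_of_le hlow tendsto_const_nhds (fun r => ?_)
    (fun r => ?_)
  · have hs₀ : 0 < √(r ^ 2 + a ^ 2) := by positivity
    have ht₀ : 0 < √(r ^ 2 + b ^ 2) := by positivity
    have hs : √(r ^ 2 + a ^ 2) ^ 2 = r ^ 2 + a ^ 2 := sq_sqrt (by positivity)
    have ht : √(r ^ 2 + b ^ 2) ^ 2 = r ^ 2 + b ^ 2 := sq_sqrt (by positivity)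
    simp only [radialPrimitive]
    generalize √(r ^ 2 + a ^ 2) = s at *
    generalize √(r ^ 2 + b ^ 2) = t at *
    rw [← hs]
    have hrt : r ^ 2 ≤ s * t := by nlinarith [sq_nonneg a, sq_nonneg b]
    rw [neg_div, neg_div, neg_le_neg_iff, div_le_div_iff₀ (by positivity) (by positivity)]
    nlinarith [mul_pos hs₀ ht₀, mul_pos (mul_pos hs₀ ht₀) ht₀]
  · simp only [radialPrimitive, neg_div, Left.neg_nonpos_iff]
    positivity

theorem lintegral_Ioi_pow_three_div_sqrt_pow_three_mul (ha : a ≠ 0) (hb : b ≠ 0) :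
    ∫⁻ ρ in Ioi 0, ENNReal.ofReal (ρ ^ 3 / (√(ρ ^ 2 + a ^ 2) ^ 3 * √(ρ ^ 2 + b ^ 2) ^ 3)) =
      ENNReal.ofReal ((|a| + |b|) ^ 2)⁻¹ := by
  rw [lintegral_Ioi_ofReal_deriv_of_nonneg (fun ρ _ => hasDerivAt_radialPrimitive ha hb ρ)
    (fun ρ (hρ : 0 < ρ) => by positivity) (tendsto_radialPrimitive_atTop ha hb),
    radialPrimitive_zero ha hb, zero_sub, neg_neg]

end Radial

theorem lintegral_sq_snd_div_sqrt_pow_three_mul {a b : ℝ} (ha : a ≠ 0) (hb : b ≠ 0) :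
    ∫⁻ q : ℝ × ℝ, ENNReal.ofReal (q.2 ^ 2 /
        (√(q.1 ^ 2 + q.2 ^ 2 + a ^ 2) ^ 3 * √(q.1 ^ 2 + q.2 ^ 2 + b ^ 2) ^ 3)) =
      ENNReal.ofReal ((|a| + |b|) ^ 2)⁻¹ * ENNReal.ofReal π := by
  set f := fun q : ℝ × ℝ => ENNReal.ofReal (q.2 ^ 2 /
    (√(q.1 ^ 2 + q.2 ^ 2 + a ^ 2) ^ 3 * √(q.1 ^ 2 + q.2 ^ 2 + b ^ 2) ^ 3))
  set radial := fun ρ : ℝ => ENNReal.ofReal (ρ ^ 3 / (√(ρ ^ 2 + a ^ 2) ^ 3 * √(ρ ^ 2 + b ^ 2) ^ 3))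
  set angular := fun θ : ℝ => ENNReal.ofReal (sin θ ^ 2)
  have hpolar : ∀ p ∈ polarCoord.target,
      ENNReal.ofReal p.1 • f (polarCoord.symm p) = radial p.1 * angular p.2 := by
    rintro ⟨ρ, θ⟩ ⟨hρ, -⟩
    have hρ : 0 < ρ := hρ
    have hρθ : (ρ * cos θ) ^ 2 + (ρ * sin θ) ^ 2 = ρ ^ 2 := by
      linear_combination ρ ^ 2 * sin_sq_add_cos_sq θ
    simp only [f, radial, angular, polarCoord_symm_apply, hρθ, smul_eq_mul]
    rw [← ENNReal.ofReal_mul hρ.le, ← ENNReal.ofReal_mul (by positivity)]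
    congr 1
    ring
  rw [← lintegral_comp_polarCoord_symm,
    setLIntegral_congr_fun polarCoord.open_target.measurableSet hpolar, polarCoord_target,
    Measure.volume_eq_prod, ← Measure.prod_restrict,
    lintegral_prod_mul (by fun_prop) (by fun_prop),
    lintegral_Ioi_pow_three_div_sqrt_pow_three_mul ha hb, lintegral_sin_sq_Ioo_neg_pi_pi]

theorem lintegral_Ioi_inv_sq_two_mul_sub {c : ℝ} (hc : 0 < c) :
    ∫⁻ z in Ioi c, ENNReal.ofReal ((2 * z - c) ^ 2)⁻¹ = ENNReal.ofReal (2 * c)⁻¹ := by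
  have hderiv : ∀ z ∈ Ici c,
      HasDerivAt (fun z => -(2 * (2 * z - c))⁻¹) ((2 * z - c) ^ 2)⁻¹ z := by
    intro z (hz : c ≤ z)
    have hz' : 2 * (2 * z - c) ≠ 0 := by nlinarith
    refine (((((hasDerivAt_id' z).const_mul 2).sub_const c).const_mul 2).inv hz').neg.congr_deriv ?_
    field_simp
  have hlim : Tendsto (fun z : ℝ => -(2 * (2 * z - c))⁻¹) atTop (𝓝 0) := by
    have h : Tendsto (fun z : ℝ => 2 * (2 * z - c)) atTop atTop :=
      (tendsto_atTop_add_const_right _ (-c) (tendsto_id.const_mul_atTop two_pos)).const_mul_atTop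
        two_pos
    simpa using (tendsto_inv_atTop_zero.comp h).neg
  rw [lintegral_Ioi_ofReal_deriv_of_nonneg hderiv (fun z _ => by positivity) hlim]
  congr 1
  ring

theorem lintegral_inv_sq_abs_add_abs_sub {c : ℝ} (hc : 0 < c) :
    ∫⁻ z, ENNReal.ofReal ((|z| + |z - c|) ^ 2)⁻¹ = ENNReal.ofReal (2 / c) := by
  set f := fun z : ℝ => ENNReal.ofReal ((|z| + |z - c|) ^ 2)⁻¹
  have hIoi : ∫⁻ z in Ioi c, f z = ENNReal.ofReal (2 * c)⁻¹ := by
    rw [← lintegral_Ioi_inv_sq_two_mul_sub hc]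
    refine setLIntegral_congr_fun measurableSet_Ioi fun z (hz : c < z) => ?_
    simp only [f, abs_of_pos (hc.trans hz), abs_of_pos (sub_pos.2 hz)]
    ring_nf
  have hIio : ∫⁻ z in Iio 0, f z = ∫⁻ z in Ioi c, f z := by
    have hsymm : ∀ z, f (c - z) = f z := fun z => by
      simp only [f, sub_sub_cancel_left, abs_neg, abs_sub_comm c z, add_comm]
    have hpre : (fun z => c - z) ⁻¹' Ioi c = Iio 0 := by ext z; simp
    have := (Measure.measurePreserving_sub_left volume c).setLIntegral_comp_preimage_emb
      (MeasurableEquiv.subLeft c).measurableEmbedding f (Ioi c)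
    rwa [hpre, funext hsymm] at this
  have hIcc : ∫⁻ z in Icc 0 c, f z = ENNReal.ofReal c⁻¹ := by
    have hconst : ∀ z ∈ Icc 0 c, f z = ENNReal.ofReal (c ^ 2)⁻¹ := fun z hz => by
      simp only [f, abs_of_nonneg hz.1, abs_of_nonpos (sub_nonpos.2 hz.2)]
      ring_nf
    rw [setLIntegral_congr_fun measurableSet_Icc hconst, setLIntegral_const, Real.volume_Icc,
      sub_zero, ← ENNReal.ofReal_mul (by positivity)]
    congr 1
    field_simp
  calc ∫⁻ z, f z = (∫⁻ z in Iio 0, f z) + ((∫⁻ z in Icc 0 c, f z) + ∫⁻ z in Ioi c, f z) := by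
        rw [← lintegral_union measurableSet_Ioi ((Iic_disjoint_Ioi le_rfl).mono_left
            Icc_subset_Iic_self), Icc_union_Ioi_eq_Ici hc.le,
          ← lintegral_union measurableSet_Ici (Iio_disjoint_Ici le_rfl), Iio_union_Ici,
          setLIntegral_univ]
    _ = ENNReal.ofReal (2 / c) := by
        rw [hIio, hIoi, hIcc, ← ENNReal.ofReal_add (by positivity) (by positivity),
          ← ENNReal.ofReal_add (by positivity) (by positivity)]
        congr 1
        field_simp
        ring

def heightPlaneEquiv : EuclideanSpace ℝ (Fin 3) ≃ᵐ ℝ × (ℝ × ℝ) :=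
  (MeasurableEquiv.toLp 2 (Fin 3 → ℝ)).symm.trans
    ((MeasurableEquiv.piFinSuccAbove (fun _ : Fin 3 => ℝ) 2).trans
      ((MeasurableEquiv.refl ℝ).prodCongr MeasurableEquiv.finTwoArrow))

theorem heightPlaneEquiv_apply (x : EuclideanSpace ℝ (Fin 3)) :
    heightPlaneEquiv x = (x 2, (x 0, x 1)) := by
  simp [heightPlaneEquiv, MeasurableEquiv.piFinSuccAbove, MeasurableEquiv.finTwoArrow,
    Fin.insertNthEquiv, MeasurableEquiv.prodCongr]
  constructor <;> rfl

theorem measurePreserving_heightPlaneEquiv : MeasurePreserving heightPlaneEquiv :=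
  ((MeasurePreserving.id volume).prod (volume_preserving_finTwoArrow ℝ)).comp
    ((volume_preserving_piFinSuccAbove (fun _ : Fin 3 => ℝ) 2).comp
      (EuclideanSpace.volume_preserving_symm_measurableEquiv_toLp (Fin 3)))

theorem EuclideanSpace.norm_fin_three (x : EuclideanSpace ℝ (Fin 3)) :
    ‖x‖ = √(x 0 ^ 2 + x 1 ^ 2 + x 2 ^ 2) := by
  simp [EuclideanSpace.norm_eq, Fin.sum_univ_three]

theorem norm_sub_e3 (x : EuclideanSpace ℝ (Fin 3)) :
    ‖x - e3‖ = √(x 0 ^ 2 + x 1 ^ 2 + (x 2 - 1) ^ 2) := by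
  simp [EuclideanSpace.norm_fin_three, e3]

theorem lintegral_sq_second_coord :
    ∫⁻ x : EuclideanSpace ℝ (Fin 3), ENNReal.ofReal ((x 1) ^ 2 / (‖x‖ ^ 3 * ‖x - e3‖ ^ 3)) =
      ENNReal.ofReal (2 * π) := by
  set F : ℝ × (ℝ × ℝ) → ENNReal := fun p => ENNReal.ofReal (p.2.2 ^ 2 /
    (√(p.2.1 ^ 2 + p.2.2 ^ 2 + p.1 ^ 2) ^ 3 * √(p.2.1 ^ 2 + p.2.2 ^ 2 + (p.1 - 1) ^ 2) ^ 3))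
  have hslice : ∀ᵐ z : ℝ, ∫⁻ q, F (z, q) =
      ENNReal.ofReal ((|z| + |z - 1|) ^ 2)⁻¹ * ENNReal.ofReal π := by
    filter_upwards [measure_eq_zero_iff_ae_notMem.1
      ((toFinite ({0, 1} : Set ℝ)).measure_zero volume)] with z hz
    simp only [mem_insert_iff, mem_singleton_iff, not_or] at hz
    exact (lintegral_sq_snd_div_sqrt_pow_three_mul hz.1 (sub_ne_zero.2 hz.2) :)
  calc ∫⁻ x, ENNReal.ofReal ((x 1) ^ 2 / (‖x‖ ^ 3 * ‖x - e3‖ ^ 3))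
      = ∫⁻ x, F (heightPlaneEquiv x) := by
        simp only [F, heightPlaneEquiv_apply, norm_sub_e3]
        simp only [EuclideanSpace.norm_fin_three]
    _ = ∫⁻ z, ∫⁻ q, F (z, q) := by
        rw [measurePreserving_heightPlaneEquiv.lintegral_comp_emb
          heightPlaneEquiv.measurableEmbedding, Measure.volume_eq_prod,
          lintegral_prod _ (by fun_prop)]
    _ = ENNReal.ofReal (2 * π) := by
        rw [lintegral_congr_ae hslice, lintegral_mul_const' _ _ ENNReal.ofReal_ne_top,
          lintegral_inv_sq_abs_add_abs_sub one_pos, div_one,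
          ← ENNReal.ofReal_mul zero_le_two]

/-- `∫_{ℝ³} x₂² / (‖x‖³‖x−e₃‖³) dx = 2π`, where `x₂` is the second coordinate. -/
theorem integral_sq_second_coord :
    ∫ x : EuclideanSpace ℝ (Fin 3), (x 1) ^ 2 / (‖x‖ ^ 3 * ‖x - e3‖ ^ 3) = 2 * π := by
  rw [integral_eq_lintegral_of_nonneg_ae (ae_of_all _ fun x => by positivity)
    (by fun_prop : Measurable _).aestronglyMeasurable,
    lintegral_sq_second_coord, ENNReal.toReal_ofReal (by positivity)]
end
end

section
/- ∫_{ℝ³} (x₃² − x₃) / (‖x‖³ · ‖x − e₃‖³) dx = 0, where e₃ = (0,0,1) and x₃ denotes the third coordinate of x. -/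
open MeasureTheory Real
open scoped RealInnerProductSpace

noncomputable section

open Set Filter Topology

/-!
Integrate first over the horizontal planes `x₃ = z` (Fubini), in polar coordinates. With
`s = √(r² + a)` and `t = √(r² + b)`, the function `-1 / (s t (s + t)²)` is an antiderivative of
`r / (s³ t³)`, so `∫₀^∞ r dr / (s³ t³) = 1 / (√a √b (√a + √b)²)`. For `a = z²`, `b = (z - 1)²`
the plane integral is `2π sign(z² - z) / (|z| + |z - 1|)²`. Off `z = 0, 1` this is the
derivative of `π (1 - 2z) / (|z| + |z - 1|)²`, a continuous function vanishing at `±∞`, so its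
integral over `ℝ` is `0`.
-/

lemma integral_euclideanSpace_fin_three {E : Type*} [NormedAddCommGroup E] [NormedSpace ℝ E]
    (f : EuclideanSpace ℝ (Fin 3) → E) :
    ∫ x, f x = ∫ p : ℝ × ℝ × ℝ, f !₂[p.2.1, p.2.2, p.1] := by
  let Φ : ℝ × ℝ × ℝ ≃ᵐ EuclideanSpace ℝ (Fin 3) :=
    (((MeasurableEquiv.refl ℝ).prodCongr MeasurableEquiv.finTwoArrow).symm.trans
      (MeasurableEquiv.piFinSuccAbove (fun _ : Fin 3 => ℝ) 2).symm).trans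
      (MeasurableEquiv.toLp 2 (Fin 3 → ℝ))
  have hΦ : MeasurePreserving Φ :=
    (PiLp.volume_preserving_toLp (Fin 3)).comp
      ((volume_preserving_piFinSuccAbove (fun _ : Fin 3 => ℝ) 2).symm _ |>.comp
        (((MeasurePreserving.id volume).prod (volume_preserving_finTwoArrow ℝ)).symm _))
  rw [← hΦ.integral_comp' f]
  congr 1 with ⟨z, u, v⟩
  congr 1
  ext j
  fin_cases j <;> rfl

lemma norm_toLp_fin_three (u v z : ℝ) : ‖!₂[u, v, z]‖ = √(u ^ 2 + v ^ 2 + z ^ 2) := by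
  simp [EuclideanSpace.norm_eq, Fin.sum_univ_three]

lemma toLp_fin_three_sub_e3 (u v z : ℝ) : !₂[u, v, z] - e3 = !₂[u, v, z - 1] := by
  ext j
  fin_cases j <;> simp [e3]

lemma integral_comp_sq_add_sq (g : ℝ → ℝ) :
    ∫ p : ℝ × ℝ, g (p.1 ^ 2 + p.2 ^ 2) = 2 * π * ∫ r in Ioi (0 : ℝ), r * g (r ^ 2) := by
  have hpolar : ∀ p : ℝ × ℝ, p.1 • g ((polarCoord.symm p).1 ^ 2 + (polarCoord.symm p).2 ^ 2)
      = p.1 * g (p.1 ^ 2) * 1 := by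
    intro p
    simp [polarCoord_symm_apply, mul_pow, ← mul_add, cos_sq_add_sin_sq]
  rw [← integral_comp_polarCoord_symm, polarCoord_target, Measure.volume_eq_prod]
  simp_rw [hpolar]
  rw [setIntegral_prod_mul (fun r => r * g (r ^ 2)) (fun _ => (1 : ℝ)), mul_comm]
  simp [two_mul, pi_pos.le]

lemma integral_eq_sub_of_hasDerivAt_off_countable_of_tendsto {E : Type*} [NormedAddCommGroup E]
    [NormedSpace ℝ E] [CompleteSpace E] {f f' : ℝ → E} {s : Set ℝ} {m n : E}
    (hs : s.Countable) (hcont : Continuous f) (hderiv : ∀ x ∉ s, HasDerivAt f (f' x) x)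
    (hint : Integrable f') (hbot : Tendsto f atBot (𝓝 m)) (htop : Tendsto f atTop (𝓝 n)) :
    ∫ x, f' x = n - m := by
  refine tendsto_nhds_unique
    (intervalIntegral_tendsto_integral hint tendsto_neg_atTop_atBot tendsto_id) ?_
  refine (htop.sub (hbot.comp tendsto_neg_atTop_atBot)).congr' ?_
  filter_upwards [eventually_ge_atTop 0] with R hR
  exact (integral_eq_of_hasDerivAt_off_countable_of_le f f' (by linarith) hs hcont.continuousOn
    (fun x hx => hderiv x hx.2) hint.intervalIntegrable).symm

lemma hasDerivAt_sqrt_sq_add {c : ℝ} (hc : 0 < c) (r : ℝ) :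
    HasDerivAt (fun r => √(r ^ 2 + c)) (r / √(r ^ 2 + c)) r := by
  have h := ((hasDerivAt_pow 2 r).add_const c).sqrt (by positivity)
  convert h using 1
  field_simp
  ring

lemma hasDerivAt_radial_antideriv {a b : ℝ} (ha : 0 < a) (hb : 0 < b) (r : ℝ) :
    HasDerivAt
      (fun r => -(√(r ^ 2 + a) * √(r ^ 2 + b) * (√(r ^ 2 + a) + √(r ^ 2 + b)) ^ 2)⁻¹)
      (r / (√(r ^ 2 + a) ^ 3 * √(r ^ 2 + b) ^ 3)) r := by
  have hs := hasDerivAt_sqrt_sq_add ha r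
  have ht := hasDerivAt_sqrt_sq_add hb r
  have hs0 : 0 < √(r ^ 2 + a) := by positivity
  have ht0 : 0 < √(r ^ 2 + b) := by positivity
  refine ((((hs.mul ht).mul ((hs.add ht).pow 2)).inv
    (mul_pos (mul_pos hs0 ht0) (pow_pos (add_pos hs0 ht0) 2)).ne').neg).congr_deriv ?_
  simp only [Pi.mul_apply, Pi.add_apply, Pi.pow_apply]
  field_simp
  ring

lemma tendsto_sqrt_sq_add_atTop (c : ℝ) : Tendsto (fun r => √(r ^ 2 + c)) atTop atTop :=
  tendsto_sqrt_atTop.comp (tendsto_atTop_add_const_right _ c (tendsto_pow_atTop two_ne_zero))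

lemma integral_Ioi_div_sqrt_pow_three_mul_sqrt_pow_three {a b : ℝ} (ha : 0 < a) (hb : 0 < b) :
    ∫ r in Ioi (0 : ℝ), r / (√(r ^ 2 + a) ^ 3 * √(r ^ 2 + b) ^ 3)
      = (√a * √b * (√a + √b) ^ 2)⁻¹ := by
  have hlim : Tendsto
      (fun r => -(√(r ^ 2 + a) * √(r ^ 2 + b) * (√(r ^ 2 + a) + √(r ^ 2 + b)) ^ 2)⁻¹)
      atTop (𝓝 0) := by
    have hs := tendsto_sqrt_sq_add_atTop a
    have ht := tendsto_sqrt_sq_add_atTop b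
    simpa using ((hs.atTop_mul_atTop₀ ht).atTop_mul_atTop₀
      ((tendsto_pow_atTop two_ne_zero).comp (hs.atTop_add_atTop ht))).inv_tendsto_atTop.neg
  rw [integral_Ioi_of_hasDerivAt_of_nonneg' (fun r _ => hasDerivAt_radial_antideriv ha hb r)
    (fun r hr => div_nonneg (le_of_lt hr) (by positivity)) hlim]
  simp

lemma integral_inv_sqrt_pow_three_mul_sqrt_pow_three {a b : ℝ} (ha : 0 < a) (hb : 0 < b) :
    ∫ p : ℝ × ℝ, (√(p.1 ^ 2 + p.2 ^ 2 + a) ^ 3 * √(p.1 ^ 2 + p.2 ^ 2 + b) ^ 3)⁻¹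
      = 2 * π * (√a * √b * (√a + √b) ^ 2)⁻¹ := by
  rw [integral_comp_sq_add_sq (fun ρ => (√(ρ + a) ^ 3 * √(ρ + b) ^ 3)⁻¹),
    ← integral_Ioi_div_sqrt_pow_three_mul_sqrt_pow_three ha hb]
  simp_rw [div_eq_mul_inv]

def sliceIntegral (z : ℝ) : ℝ :=
  (z ^ 2 - z) * (2 * π * (|z| * |z - 1| * (|z| + |z - 1|) ^ 2)⁻¹)

def sliceAntideriv (z : ℝ) : ℝ := π * (1 - 2 * z) / (|z| + |z - 1|) ^ 2

lemma integral_horizontal_plane (z : ℝ) :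
    ∫ p : ℝ × ℝ, (z ^ 2 - z) /
        (√(p.1 ^ 2 + p.2 ^ 2 + z ^ 2) ^ 3 * √(p.1 ^ 2 + p.2 ^ 2 + (z - 1) ^ 2) ^ 3)
      = sliceIntegral z := by
  rcases eq_or_ne (z ^ 2 - z) 0 with hz | hz
  · simp [sliceIntegral, hz]
  have h0 : z ≠ 0 := by rintro rfl; simp at hz
  have h1 : z - 1 ≠ 0 := by intro h; apply hz; linear_combination z * h
  simp_rw [div_eq_mul_inv, integral_const_mul, sliceIntegral,
    integral_inv_sqrt_pow_three_mul_sqrt_pow_three (by positivity : 0 < z ^ 2)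
      (by positivity : 0 < (z - 1) ^ 2), sqrt_sq_eq_abs]

lemma one_le_abs_add_abs_sub_one (z : ℝ) : 1 ≤ |z| + |z - 1| := by
  simpa using abs_sub z (z - 1)

lemma abs_mul_abs_sub_one_of_notMem_Ioo {z : ℝ} (hz : z ∉ Ioo 0 1) :
    |z| * |z - 1| = z ^ 2 - z := by
  rw [← abs_mul, abs_of_nonneg]
  · ring
  · simp only [mem_Ioo, not_and_or, not_lt] at hz
    rcases hz with hz | hz <;> nlinarith

lemma abs_add_abs_sub_one_sq_of_notMem_Ioo {z : ℝ} (hz : z ∉ Ioo 0 1) :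
    (|z| + |z - 1|) ^ 2 = (1 - 2 * z) ^ 2 := by
  rw [add_sq, sq_abs, sq_abs, mul_assoc, abs_mul_abs_sub_one_of_notMem_Ioo hz]
  ring

lemma one_sub_two_mul_ne_zero_of_notMem_Ioo {z : ℝ} (hz : z ∉ Ioo 0 1) : 1 - 2 * z ≠ 0 := by
  intro h
  exact hz ⟨by linarith, by linarith⟩

lemma sliceAntideriv_of_notMem_Ioo {z : ℝ} (hz : z ∉ Ioo 0 1) :
    sliceAntideriv z = π * (1 - 2 * z)⁻¹ := by
  have := one_sub_two_mul_ne_zero_of_notMem_Ioo hz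
  rw [sliceAntideriv, abs_add_abs_sub_one_sq_of_notMem_Ioo hz]
  field_simp

lemma sliceAntideriv_of_mem_Icc {z : ℝ} (hz : z ∈ Icc 0 1) :
    sliceAntideriv z = π * (1 - 2 * z) := by
  rw [sliceAntideriv, abs_of_nonneg hz.1, abs_of_nonpos (by linarith [hz.2])]
  ring

lemma continuous_sliceAntideriv : Continuous sliceAntideriv :=
  (by fun_prop : Continuous fun z : ℝ => π * (1 - 2 * z)).div (by fun_prop)
    fun z => (pow_pos (one_pos.trans_le (one_le_abs_add_abs_sub_one z)) 2).ne'

lemma hasDerivAt_sliceAntideriv {z : ℝ} (h0 : z ≠ 0) (h1 : z ≠ 1) :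
    HasDerivAt sliceAntideriv (sliceIntegral z) z := by
  by_cases hz : z ∈ Ioo 0 1
  · have hloc : sliceAntideriv =ᶠ[𝓝 z] fun w => π * (1 - 2 * w) := by
      filter_upwards [isOpen_Ioo.mem_nhds hz] with w hw
      exact sliceAntideriv_of_mem_Icc (Ioo_subset_Icc_self hw)
    refine (((hasDerivAt_id' z).const_mul 2).const_sub 1 |>.const_mul π)
      |>.congr_of_eventuallyEq hloc |>.congr_deriv ?_
    rw [sliceIntegral, abs_of_pos hz.1, abs_of_neg (by linarith [hz.2])]
    have : z * (1 - z) ≠ 0 := mul_ne_zero h0 (by linarith [hz.2])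
    field_simp
    ring
  · have hz' : z ∉ Icc 0 1 := by
      rintro ⟨hz0, hz1⟩
      exact hz ⟨lt_of_le_of_ne hz0 (Ne.symm h0), lt_of_le_of_ne hz1 h1⟩
    have hloc : sliceAntideriv =ᶠ[𝓝 z] fun w => π * (1 - 2 * w)⁻¹ := by
      filter_upwards [isClosed_Icc.isOpen_compl.mem_nhds hz'] with w hw
      exact sliceAntideriv_of_notMem_Ioo fun h => hw (Ioo_subset_Icc_self h)
    have hne := one_sub_two_mul_ne_zero_of_notMem_Ioo hz
    refine ((((hasDerivAt_id' z).const_mul 2).const_sub 1).inv hne |>.const_mul π)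
      |>.congr_of_eventuallyEq hloc |>.congr_deriv ?_
    rw [sliceIntegral, abs_mul_abs_sub_one_of_notMem_Ioo hz,
      abs_add_abs_sub_one_sq_of_notMem_Ioo hz]
    have : z ^ 2 - z ≠ 0 := by
      rw [show z ^ 2 - z = z * (z - 1) by ring]
      exact mul_ne_zero h0 (sub_ne_zero.2 h1)
    field_simp

lemma tendsto_sliceAntideriv_atTop : Tendsto sliceAntideriv atTop (𝓝 0) := by
  have h : Tendsto (fun z : ℝ => 1 - 2 * z) atTop atBot :=
    (tendsto_atBot_add_const_left _ 1
      (tendsto_id.const_mul_atTop_of_neg (by norm_num : (-2 : ℝ) < 0))).congr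
        fun z => by simp only [id]; ring
  have hlim : Tendsto (fun z : ℝ => π * (1 - 2 * z)⁻¹) atTop (𝓝 0) := by
    simpa using (tendsto_inv_atBot_zero.comp h).const_mul π
  refine hlim.congr' ?_
  filter_upwards [eventually_gt_atTop 1] with z hz
  exact (sliceAntideriv_of_notMem_Ioo fun h => by linarith [h.2]).symm

lemma tendsto_sliceAntideriv_atBot : Tendsto sliceAntideriv atBot (𝓝 0) := by
  have h : Tendsto (fun z : ℝ => 1 - 2 * z) atBot atTop :=
    (tendsto_atTop_add_const_left _ 1
      (tendsto_id.const_mul_atBot_of_neg (by norm_num : (-2 : ℝ) < 0))).congr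
        fun z => by simp only [id]; ring
  have hlim : Tendsto (fun z : ℝ => π * (1 - 2 * z)⁻¹) atBot (𝓝 0) := by
    simpa using (tendsto_inv_atTop_zero.comp h).const_mul π
  refine hlim.congr' ?_
  filter_upwards [eventually_lt_atBot 0] with z hz
  exact (sliceAntideriv_of_notMem_Ioo fun h => by linarith [h.1]).symm

lemma integral_sliceIntegral (h : Integrable sliceIntegral) : ∫ z, sliceIntegral z = 0 := by
  have hs : ({0, 1} : Set ℝ).Countable := (Set.toFinite _).countable
  simpa using integral_eq_sub_of_hasDerivAt_off_countable_of_tendsto hs continuous_sliceAntideriv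
    (fun z hz => hasDerivAt_sliceAntideriv (fun h => hz (by simp [h])) (fun h => hz (by simp [h])))
    h tendsto_sliceAntideriv_atBot tendsto_sliceAntideriv_atTop

/-- `∫_{ℝ³} (x₃² − x₃) / (‖x‖³‖x−e₃‖³) dx = 0`, where `x₃` is the third coordinate. -/
theorem integral_third_coord_term :
    ∫ x : EuclideanSpace ℝ (Fin 3), ((x 2) ^ 2 - x 2) / (‖x‖ ^ 3 * ‖x - e3‖ ^ 3) = 0 := by
  rw [integral_euclideanSpace_fin_three]
  simp only [toLp_fin_three_sub_e3, norm_toLp_fin_three, Matrix.cons_val]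
  set F : ℝ × ℝ × ℝ → ℝ := fun p => (p.1 ^ 2 - p.1) /
    (√(p.2.1 ^ 2 + p.2.2 ^ 2 + p.1 ^ 2) ^ 3 * √(p.2.1 ^ 2 + p.2.2 ^ 2 + (p.1 - 1) ^ 2) ^ 3)
  by_cases hF : Integrable F
  · have hslice : ∀ z, ∫ w, F (z, w) = sliceIntegral z := integral_horizontal_plane
    rw [Measure.volume_eq_prod, integral_prod F hF]
    simp_rw [hslice]
    exact integral_sliceIntegral (hF.integral_prod_left.congr (.of_forall hslice))
  · exact integral_undef hF
end
end

section
/- Let e₁ = (1,0,0) and e₃ = (0,0,1), and let ωb ∈ ℝ³ satisfy ⟨ωb, e₁⟩ = 0. Then ∫_{ℝ³} ⟨ωb × x, e₁ × (x − e₃)⟩ / (‖x‖³ · ‖x − e₃‖³) dx = 0. That is, the interaction energy of a vortex at the origin with vorticity having no x-component and a vortex at e₃ with vorticity e₁ vanishes. -/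
open MeasureTheory Real
open scoped RealInnerProductSpace

noncomputable section

/-- The first standard basis vector `e₁ = (1,0,0)`. -/
def e1 : EuclideanSpace ℝ (Fin 3) := (WithLp.equiv 2 (Fin 3 → ℝ)).symm ![1, 0, 0]

/-!
The reflection `σ₁` in the plane `x₁ = 0` is a measure-preserving isometry fixing `ωb` and `e₃`
and sending `e₁` to `-e₁`; being orientation reversing, it also satisfies
`σ₁ u × σ₁ v = -σ₁ (u × v)`. Together these make the integrand odd under `σ₁`, so its integral
vanishes.
-/

theorem integral_eq_zero_of_comp_eq_neg {α E : Type*} [MeasurableSpace α] {μ : Measure α}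
    [NormedAddCommGroup E] [NormedSpace ℝ E] {e : α → α} (he : MeasurePreserving e μ μ)
    (he' : MeasurableEmbedding e) {f : α → E} (hf : ∀ x, f (e x) = -f x) :
    ∫ x, f x ∂μ = 0 := by
  have h := he.integral_comp he' f
  simp only [hf, integral_neg] at h
  have h2 : (2 : ℝ) • ∫ x, f x ∂μ = 0 := by
    rw [two_smul]; nth_rewrite 1 [← h]; exact neg_add_cancel _
  exact (smul_eq_zero.mp h2).resolve_left two_ne_zero

theorem cross_neg_left (u v : EuclideanSpace ℝ (Fin 3)) : cross (-u) v = -cross u v := by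
  ext i; fin_cases i <;> simp [cross] <;> ring

theorem norm_e1 : ‖e1‖ = 1 := by
  simp [e1, EuclideanSpace.norm_eq, Fin.sum_univ_three]

theorem inner_e3_e1 : ⟪e3, e1⟫ = 0 := by
  simp [e1, e3, PiLp.inner_apply, Fin.sum_univ_three]

local notation "σ₁" => Submodule.reflection (ℝ ∙ e1)ᗮ

theorem reflection_e1_apply (x : EuclideanSpace ℝ (Fin 3)) :
    σ₁ x = (WithLp.equiv 2 (Fin 3 → ℝ)).symm ![-x 0, x 1, x 2] := by
  rw [Submodule.reflection_orthogonal_apply, Submodule.reflection_singleton_apply, norm_e1]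
  ext i; fin_cases i <;> simp [e1, PiLp.inner_apply, Fin.sum_univ_three]; ring

theorem reflection_e1_of_inner_eq_zero {v : EuclideanSpace ℝ (Fin 3)} (hv : ⟪v, e1⟫ = 0) :
    σ₁ v = v :=
  Submodule.reflection_mem_subspace_eq_self
    (Submodule.mem_orthogonal_singleton_iff_inner_left.mpr hv)

theorem cross_reflection_e1 (u v : EuclideanSpace ℝ (Fin 3)) :
    cross (σ₁ u) (σ₁ v) = -σ₁ (cross u v) := by
  simp only [reflection_e1_apply]
  ext i; fin_cases i <;> simp [cross] <;> ring

theorem inner_cross_reflection_e1 {ω : EuclideanSpace ℝ (Fin 3)} (hω : ⟪ω, e1⟫ = 0)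
    (x : EuclideanSpace ℝ (Fin 3)) :
    ⟪cross ω (σ₁ x), cross e1 (σ₁ x - e3)⟫ = -⟪cross ω x, cross e1 (x - e3)⟫ := by
  calc ⟪cross ω (σ₁ x), cross e1 (σ₁ x - e3)⟫
      = ⟪cross (σ₁ ω) (σ₁ x), -cross (σ₁ e1) (σ₁ (x - e3))⟫ := by
        rw [reflection_e1_of_inner_eq_zero hω, map_sub, reflection_e1_of_inner_eq_zero inner_e3_e1,
          Submodule.reflection_orthogonalComplement_singleton_eq_neg, cross_neg_left, neg_neg]
    _ = -⟪cross ω x, cross e1 (x - e3)⟫ := by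
        rw [cross_reflection_e1, cross_reflection_e1, neg_neg, inner_neg_left,
          LinearIsometryEquiv.inner_map_map]

/-- The interaction energy of a vortex at the origin whose vorticity has no
`x`-component with a vortex at `e₃` of vorticity `e₁` vanishes. -/
theorem interaction_energy_orthogonal_vanishes (ωb : EuclideanSpace ℝ (Fin 3))
    (hωb : ⟪ωb, e1⟫ = 0) :
    ∫ x : EuclideanSpace ℝ (Fin 3),
      ⟪cross ωb x, cross e1 (x - e3)⟫ / (‖x‖ ^ 3 * ‖x - e3‖ ^ 3) = 0 := by
  refine integral_eq_zero_of_comp_eq_neg (σ₁).measurePreserving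
    (σ₁).toHomeomorph.measurableEmbedding fun x => ?_
  have hsub : σ₁ x - e3 = σ₁ (x - e3) := by
    rw [map_sub, reflection_e1_of_inner_eq_zero inner_e3_e1]
  rw [inner_cross_reflection_e1 hωb, hsub, LinearIsometryEquiv.norm_map,
    LinearIsometryEquiv.norm_map, neg_div]
end
end

section
/- For arbitrary vectors A, C, α, β, γ ∈ ℝ³, the following three quantities are equal: (i) ⟨A × α, γ⟩·⟨C, β⟩ + ⟨C × γ, α⟩·⟨A, β⟩; (ii) ⟨A × α, C⟩·⟨γ, β⟩ + ⟨C × γ, A⟩·⟨α, β⟩; (iii) ⟨β, (α × γ) × (C × A)⟩. -/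
/-!
(i) and (ii) are the two `BAC − CAB` expansions of the double cross product `(α × γ) × (C × A)`
in (iii): one around the factor `C × A`, the other around `α × γ`. Rotating the resulting scalar
triple products cyclically puts them in the shapes occurring in (i) and (ii).
-/

open MeasureTheory Real
open scoped RealInnerProductSpace

noncomputable section

open Matrix WithLp

theorem cross_eq_toLp_crossProduct (u v : EuclideanSpace ℝ (Fin 3)) :
    cross u v = toLp 2 (ofLp u ⨯₃ ofLp v) :=
  rfl

theorem real_inner_eq_dotProduct {ι : Type*} [Fintype ι] (u v : EuclideanSpace ℝ ι) :
    ⟪u, v⟫ = ofLp u ⬝ᵥ ofLp v := by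
  rw [EuclideanSpace.inner_eq_star_dotProduct, star_trivial, dotProduct_comm]

theorem inner_cross_cyclic (u v w : EuclideanSpace ℝ (Fin 3)) :
    ⟪cross u v, w⟫ = ⟪cross v w, u⟫ := by
  simp only [real_inner_eq_dotProduct, cross_eq_toLp_crossProduct]
  rw [dotProduct_comm, dotProduct_comm _ (ofLp u)]
  exact triple_product_permutation _ _ _

theorem inner_cross_anticomm (u v w : EuclideanSpace ℝ (Fin 3)) :
    ⟪cross v u, w⟫ = -⟪cross u v, w⟫ := by
  rw [cross_eq_toLp_crossProduct, cross_eq_toLp_crossProduct, ← cross_anticomm, toLp_neg,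
    inner_neg_left]

theorem inner_cross_cross_eq (x u v w : EuclideanSpace ℝ (Fin 3)) :
    ⟪x, cross (cross u v) w⟫ = ⟪u, w⟫ * ⟪v, x⟫ - ⟪v, w⟫ * ⟪u, x⟫ := by
  simp only [real_inner_eq_dotProduct, cross_eq_toLp_crossProduct, cross_cross_eq_smul_sub_smul,
    dotProduct_sub, dotProduct_smul, smul_eq_mul, dotProduct_comm]

theorem inner_cross_cross_eq' (x u v w : EuclideanSpace ℝ (Fin 3)) :
    ⟪x, cross u (cross v w)⟫ = ⟪u, w⟫ * ⟪v, x⟫ - ⟪v, u⟫ * ⟪w, x⟫ := by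
  simp only [real_inner_eq_dotProduct, cross_eq_toLp_crossProduct, cross_cross_eq_smul_sub_smul',
    dotProduct_sub, dotProduct_smul, smul_eq_mul, dotProduct_comm]

/-- The five-vector identity underlying the reciprocity of interaction energy flow:
`⟨A×α,γ⟩⟨C,β⟩ + ⟨C×γ,α⟩⟨A,β⟩ = ⟨A×α,C⟩⟨γ,β⟩ + ⟨C×γ,A⟩⟨α,β⟩ = ⟨β,(α×γ)×(C×A)⟩`. -/
theorem five_vector_identity (A C α β γ : EuclideanSpace ℝ (Fin 3)) :
    ⟪cross A α, γ⟫ * ⟪C, β⟫ + ⟪cross C γ, α⟫ * ⟪A, β⟫ =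
        ⟪cross A α, C⟫ * ⟪γ, β⟫ + ⟪cross C γ, A⟫ * ⟪α, β⟫ ∧
      ⟪cross A α, γ⟫ * ⟪C, β⟫ + ⟪cross C γ, α⟫ * ⟪A, β⟫ =
        ⟪β, cross (cross α γ) (cross C A)⟫ := by
  have triple_Cγα : ⟪cross C γ, α⟫ = -⟪C, cross α γ⟫ := by
    rw [inner_cross_cyclic, inner_cross_anticomm, real_inner_comm]
  have triple_AαC : ⟪cross A α, C⟫ = ⟪α, cross C A⟫ := by
    rw [inner_cross_cyclic, inner_cross_cyclic, real_inner_comm]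
  have triple_CγA : ⟪cross C γ, A⟫ = -⟪γ, cross C A⟫ := by
    rw [inner_cross_cyclic, inner_cross_cyclic, inner_cross_anticomm, real_inner_comm]
  have expand_right : ⟪β, cross (cross α γ) (cross C A)⟫ =
      ⟪cross A α, γ⟫ * ⟪C, β⟫ + ⟪cross C γ, α⟫ * ⟪A, β⟫ := by
    rw [inner_cross_cross_eq', inner_cross_cyclic A, triple_Cγα]
    ring
  have expand_left : ⟪β, cross (cross α γ) (cross C A)⟫ =
      ⟪cross A α, C⟫ * ⟪γ, β⟫ + ⟪cross C γ, A⟫ * ⟪α, β⟫ := by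
    rw [inner_cross_cross_eq, triple_AαC, triple_CγA]
    ring
  exact ⟨expand_right.symm.trans expand_left, expand_right.symm⟩
end
end

section
/- Let c ∈ ℝ³, w ∈ ℝ³, and let g : ℝ³ → ℝ³ be defined by g(b) := (⟨b − c, w⟩ / ‖b − c‖³) · (b − c). Then for every b ≠ c and every y ∈ ℝ³, g is differentiable at b and its Fréchet derivative at b applied to y equals [ ⟨b − c, w⟩·‖b − c‖²·y + ( ⟨y, w⟩·‖b − c‖² − 3·⟨b − c, y⟩·⟨b − c, w⟩ )·(b − c) ] / ‖b − c‖⁵. -/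
/-! After translating by `c`, `g` is `x ↦ φ x • x` with `φ x = ⟪x, w⟫ / ‖x‖ ^ 3`. Since
`‖x‖ ^ 3` has derivative `3 ‖x‖ ⟪x, ·⟫`, the quotient rule gives
`Dφ(x) y = (‖x‖² ⟪y, w⟫ - 3 ⟪x, w⟫ ⟪x, y⟫) / ‖x‖⁵`, and the product rule
`D(φ • id)(x) y = φ x • y + Dφ(x) y • x` is the claimed formula. -/

open MeasureTheory Real
open scoped RealInnerProductSpace

noncomputable section

/-- The map `g(b) = (⟨b − c, w⟩/‖b − c‖³)·(b − c)` (Equation 19 of the paper). -/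
def g (c w b : EuclideanSpace ℝ (Fin 3)) : EuclideanSpace ℝ (Fin 3) :=
  (⟪b - c, w⟫ / ‖b - c‖ ^ 3) • (b - c)

section InnerProductSpace

variable {E : Type*} [NormedAddCommGroup E] [InnerProductSpace ℝ E]

theorem hasFDerivAt_norm_pow {n : ℕ} (hn : 2 ≤ n) (x : E) :
    HasFDerivAt (fun x : E => ‖x‖ ^ n) ((n * ‖x‖ ^ (n - 2)) • innerSL ℝ x) x := by
  have h := hasFDerivAt_norm_rpow x (p := n) (by exact_mod_cast hn)
  rw [← Nat.cast_ofNat, ← Nat.cast_sub hn] at h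
  simpa only [Real.rpow_natCast] using h

theorem hasFDerivAt_inner_div_norm_pow_three {x : E} (hx : x ≠ 0) (w : E) :
    HasFDerivAt (fun x : E => ⟪x, w⟫ / ‖x‖ ^ 3)
      ((‖x‖ ^ 5)⁻¹ • (‖x‖ ^ 2 • innerSL ℝ w - (3 * ⟪x, w⟫) • innerSL ℝ x)) x := by
  have hx3 : ‖x‖ ^ 3 ≠ 0 := by positivity
  have hnum : HasFDerivAt (fun x : E => ⟪x, w⟫) (innerSL ℝ w) x := by
    convert (innerSL ℝ w).hasFDerivAt using 1
    ext y
    simp [real_inner_comm]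
  have hden :=
    (hasDerivAt_inv hx3).comp_hasFDerivAt x (hasFDerivAt_norm_pow (n := 3) (by norm_num) x)
  refine (hnum.mul hden).congr_fderiv ?_
  ext y
  simp only [Nat.cast_ofNat, Nat.reduceSub, pow_one, neg_smul, smul_neg, add_apply, neg_apply,
    smul_apply, coe_innerSL_apply, smul_eq_mul, sub_apply, Function.comp_apply]
  field_simp
  ring

theorem hasFDerivAt_inner_div_norm_pow_three_smul {x : E} (hx : x ≠ 0) (w : E) :
    HasFDerivAt (fun x : E => (⟪x, w⟫ / ‖x‖ ^ 3) • x)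
      ((‖x‖ ^ 5)⁻¹ • ((⟪x, w⟫ * ‖x‖ ^ 2) • ContinuousLinearMap.id ℝ E +
        (‖x‖ ^ 2 • innerSL ℝ w - (3 * ⟪x, w⟫) • innerSL ℝ x).smulRight x)) x := by
  refine ((hasFDerivAt_inner_div_norm_pow_three hx w).smul (hasFDerivAt_id x)).congr_fderiv ?_
  ext y
  simp only [id_eq, add_apply, smul_apply, ContinuousLinearMap.id_apply,
    ContinuousLinearMap.smulRight_apply, sub_apply, coe_innerSL_apply, smul_eq_mul, smul_add]
  match_scalars <;> field_simp

end InnerProductSpace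

/-- The Jacobian computation (Equation 19): `g` is differentiable away from `c`,
with the stated explicit Fréchet derivative. -/
theorem g_fderiv (c w : EuclideanSpace ℝ (Fin 3)) (b : EuclideanSpace ℝ (Fin 3))
    (hbc : b ≠ c) (y : EuclideanSpace ℝ (Fin 3)) :
    DifferentiableAt ℝ (g c w) b ∧
      fderiv ℝ (g c w) b y =
        (‖b - c‖ ^ 5)⁻¹ •
          ((⟪b - c, w⟫ * ‖b - c‖ ^ 2) • y +
            (⟪y, w⟫ * ‖b - c‖ ^ 2 - 3 * ⟪b - c, y⟫ * ⟪b - c, w⟫) • (b - c)) := by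
  have hg : HasFDerivAt (g c w) _ b :=
    (hasFDerivAt_comp_sub c).2 (hasFDerivAt_inner_div_norm_pow_three_smul (sub_ne_zero.2 hbc) w)
  refine ⟨hg.differentiableAt, ?_⟩
  rw [hg.fderiv]
  simp only [smul_apply, add_apply, ContinuousLinearMap.id_apply,
    ContinuousLinearMap.smulRight_apply, sub_apply, innerSL_apply_apply, smul_eq_mul,
    real_inner_comm w y]
  module
end
end

section
/- Let c ∈ ℝ³, w ∈ ℝ³, and let g : ℝ³ → ℝ³ be defined by g(b) := (⟨b − c, w⟩ / ‖b − c‖³) · (b − c). Then for every b ≠ c and all y, z ∈ ℝ³, ⟨z, Dg(b)(y)⟩ − ⟨y, Dg(b)(z)⟩ = ( ⟨y, w⟩·⟨b − c, z⟩ − ⟨z, w⟩·⟨b − c, y⟩ ) / ‖b − c‖³, where Dg(b) denotes the Fréchet derivative of g at b. In particular, the Jacobian of g is symmetric except for this explicit antisymmetric part. -/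
open MeasureTheory Real
open scoped RealInnerProductSpace

noncomputable section

/-!
Write `g x = φ x • (x - c)` with `φ x = ⟪x - c, w⟫ * h ‖x - c‖` and `h t = t⁻³`. Then
`Dg(b) = φ b • id + (b - c) ⊗ Dφ(b)`; the multiple of the identity is symmetric, so the
antisymmetric part is `Dφ(b) y * ⟪b - c, z⟫ - Dφ(b) z * ⟪b - c, y⟫`. Since `h ∘ ‖· - c‖` is
radial, `Dφ(b) = h ‖b - c‖ • ⟪w, ·⟫ + (a multiple of ⟪b - c, ·⟫)`, and the radial term cancels
as well.
-/

section

variable {E : Type*} [NormedAddCommGroup E] [InnerProductSpace ℝ E] {b c : E}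

theorem HasDerivAt.hasFDerivAt_comp_norm_sub {h : ℝ → ℝ} {h' : ℝ}
    (hh : HasDerivAt h h' ‖b - c‖) (hbc : b ≠ c) :
    HasFDerivAt (fun x => h ‖x - c‖) ((h' / ‖b - c‖) • innerSL ℝ (b - c)) b := by
  have hr : 0 < ‖b - c‖ := norm_pos_iff.2 (sub_ne_zero.2 hbc)
  have hsqrt : HasDerivAt (h ∘ Real.sqrt) (h' * (1 / (2 * ‖b - c‖))) (‖b - c‖ ^ 2) := by
    have := hasDerivAt_sqrt (pow_pos hr 2).ne'
    rw [sqrt_sq hr.le] at this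
    exact (sqrt_sq hr.le ▸ hh).comp _ this
  have hcomp := hsqrt.comp_hasFDerivAt b ((hasFDerivAt_sub_const (𝕜 := ℝ) c).norm_sq)
  have hfun : (h ∘ Real.sqrt) ∘ (fun x => ‖x - c‖ ^ 2) = fun x => h ‖x - c‖ := by
    funext x
    simp [sqrt_sq (norm_nonneg _)]
  rw [hfun] at hcomp
  refine hcomp.congr_fderiv ?_
  ext v
  simp only [ContinuousLinearMap.comp_id, _root_.smul_apply, coe_innerSL_apply, nsmul_eq_mul,
    Nat.cast_ofNat, smul_eq_mul]
  field_simp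

theorem hasFDerivAt_inner_sub_mul {ρ : E → ℝ} {s : ℝ} (w : E)
    (hρ : HasFDerivAt ρ (s • innerSL ℝ (b - c)) b) :
    HasFDerivAt (fun x => ⟪x - c, w⟫ * ρ x)
      (ρ b • innerSL ℝ w + (s * ⟪b - c, w⟫) • innerSL ℝ (b - c)) b := by
  have hinner : HasFDerivAt (fun x => ⟪x - c, w⟫) (innerSL ℝ w) b := by
    refine ((hasFDerivAt_sub_const c).inner ℝ (hasFDerivAt_const w b)).congr_fderiv ?_
    ext v
    simp [real_inner_comm w]
  refine (hinner.mul hρ).congr_fderiv ?_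
  ext v
  simp only [_root_.add_apply, _root_.smul_apply, coe_innerSL_apply, smul_eq_mul]
  ring

theorem inner_fderiv_smul_sub_antisymm {φ : E → ℝ} {φ' : E →L[ℝ] ℝ}
    (hφ : HasFDerivAt φ φ' b) (y z : E) :
    ⟪z, fderiv ℝ (fun x => φ x • (x - c)) b y⟫ - ⟪y, fderiv ℝ (fun x => φ x • (x - c)) b z⟫ =
      φ' y * ⟪b - c, z⟫ - φ' z * ⟪b - c, y⟫ := by
  rw [HasFDerivAt.fderiv (f := fun x => φ x • (x - c)) (hφ.smul (hasFDerivAt_sub_const c))]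
  simp only [_root_.add_apply, _root_.smul_apply, ContinuousLinearMap.id_apply,
    ContinuousLinearMap.smulRight_apply, inner_add_right, real_inner_smul_right,
    real_inner_comm y z, real_inner_comm (b - c)]
  ring

theorem inner_fderiv_radial_smul_sub_antisymm {h : ℝ → ℝ} {h' : ℝ}
    (hh : HasDerivAt h h' ‖b - c‖) (hbc : b ≠ c) (w y z : E) :
    ⟪z, fderiv ℝ (fun x => (⟪x - c, w⟫ * h ‖x - c‖) • (x - c)) b y⟫ -
        ⟪y, fderiv ℝ (fun x => (⟪x - c, w⟫ * h ‖x - c‖) • (x - c)) b z⟫ =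
      h ‖b - c‖ * (⟪y, w⟫ * ⟪b - c, z⟫ - ⟪z, w⟫ * ⟪b - c, y⟫) := by
  rw [inner_fderiv_smul_sub_antisymm
    (hasFDerivAt_inner_sub_mul w (hh.hasFDerivAt_comp_norm_sub hbc))]
  simp only [_root_.add_apply, _root_.smul_apply, innerSL_apply_apply, smul_eq_mul,
    real_inner_comm w]
  ring

end

/-- The Jacobian of `g` is symmetric except for an explicit antisymmetric part:
`⟨z, Dg(b)y⟩ − ⟨y, Dg(b)z⟩ = (⟨y,w⟩⟨b−c,z⟩ − ⟨z,w⟩⟨b−c,y⟩)/‖b−c‖³`. -/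
theorem g_jacobian_antisymmetric_part (c w : EuclideanSpace ℝ (Fin 3))
    (b : EuclideanSpace ℝ (Fin 3)) (hbc : b ≠ c) (y z : EuclideanSpace ℝ (Fin 3)) :
    ⟪z, fderiv ℝ (g c w) b y⟫ - ⟪y, fderiv ℝ (g c w) b z⟫ =
      (⟪y, w⟫ * ⟪b - c, z⟫ - ⟪z, w⟫ * ⟪b - c, y⟫) / ‖b - c‖ ^ 3 := by
  have hcube : HasDerivAt (fun t : ℝ => (t ^ 3)⁻¹) _ ‖b - c‖ :=
    (hasDerivAt_pow 3 _).inv (pow_ne_zero 3 (norm_ne_zero_iff.2 (sub_ne_zero.2 hbc)))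
  have hg : g c w = fun x => (⟪x - c, w⟫ * (‖x - c‖ ^ 3)⁻¹) • (x - c) := by
    funext x
    rw [g, div_eq_mul_inv]
  rw [hg, inner_fderiv_radial_smul_sub_antisymm hcube hbc, inv_mul_eq_div]
end
end
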